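/- arXiv:1903.10701 — 2 statements merged into one kernel-verified Lean document; each statement's English description precedes it below -/
import Mathlib

section
/- For every integer n ≥ 4, two distinct seeds φ and ψ are neighbors (i.e. perms(φ) ∩ perms(ψ) ≠ ∅) if and only if both of the following hold: (i) mis(φ) = mis(ψ)⊕1 or mis(ψ) = mis(φ)⊕1, and (ii) the (n−2)-tuple obtained from φ by deleting the entry mis(ψ) equals the (n−2)-tuple obtained from ψ by deleting the entry mis(φ). -/
/-- `σ`: cyclic left shift by one position. -/
def sig (l : List ℕ) : List ℕ := l.rotate 1

/-- `τ`: transposition of the first two entries. -/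
def tau : List ℕ → List ℕ
  | a :: b :: rest => b :: a :: rest
  | l => l

/-- Apply a word over the alphabet {σ,τ} (encoded: `false` = σ, `true` = τ)
letter by letter, from left to right. -/
def applyWord (w : List Bool) (l : List ℕ) : List ℕ :=
  w.foldl (fun p c => if c then tau p else sig p) l

/-- `l` is an n-permutation: a sequence containing each of 1,…,n exactly once. -/
def IsPerm (n : ℕ) (l : List ℕ) : Prop := l.Perm (List.range' 1 n)

/-- The permutation (n, n−1, …, 1). -/
def descList (n : ℕ) : List ℕ := (List.range n).reverse.map (· + 1)

/-- Cyclic successor ⊕1 on {1,…,n−1}. -/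
def osucc (n a : ℕ) : ℕ := if a = n - 1 then 1 else a + 1

/-- Cyclic predecessor ⊖1 on {1,…,n−1}. -/
def opred (n a : ℕ) : ℕ := if a = 1 then n - 1 else a - 1

/-- From a seed (a₁, a₂, …, a_{n−1}) form (a₁, a₂⊕1, a₂, …, a_{n−1}). -/
def seedToPerm (n : ℕ) : List ℕ → List ℕ
  | a1 :: a2 :: rest => a1 :: osucc n a2 :: a2 :: rest
  | l => l

/-- ψ is a seed: an (n−1)-tuple of distinct elements of {1,…,n} with first entry n
such that (a₁, a₂⊕1, a₂, …, a_{n−1}) is an n-permutation. -/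
def IsSeed (n : ℕ) (ψ : List ℕ) : Prop :=
  ψ.length = n - 1 ∧ ψ.head? = some n ∧ IsPerm n (seedToPerm n ψ)

/-- The missing element mis(ψ) = a₂⊕1. -/
def mis (n : ℕ) (ψ : List ℕ) : ℕ := osucc n (ψ.getD 1 0)

/-- The package perms(ψ): all permutations obtained by inserting mis(ψ)
at any position of ψ and then taking any cyclic shift. -/
def perms (n : ℕ) (ψ : List ℕ) : Set (List ℕ) :=
  { π | ∃ i j, i ≤ ψ.length ∧ π = (ψ.insertIdx i (mis n ψ)).rotate j }

/-- cycle(π): the set of cyclic shifts of π. -/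
def cycle (π : List ℕ) : Set (List ℕ) := { ρ | ∃ j, ρ = π.rotate j }

/-- ψ̃ = (a₁, mis(ψ), a₂, …, a_{n−1}). -/
def tildeSeed (n : ℕ) (ψ : List ℕ) : List ℕ :=
  match ψ with
  | a1 :: rest => a1 :: mis n ψ :: rest
  | [] => []

/-- ψ^(i) (for 1 ≤ i ≤ n−1): the right cyclic shift of ψ by i−1 positions
with mis(ψ) prepended; for i = n−1 this is (x, a₂, …, a_{n−1}, a₁). -/
def seedShift (n : ℕ) (ψ : List ℕ) (i : ℕ) : List ℕ := mis n ψ :: ψ.rotate (n - i)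

/-- Length of the maximal initial run a = b⊕1 in a list. -/
def decRun (n : ℕ) : List ℕ → ℕ
  | a :: b :: rest => if a = osucc n b then decRun n (b :: rest) + 1 else 1
  | [_] => 1
  | [] => 0

/-- height(ψ): the largest k with aᵢ = a_{i+1}⊕1 for all 2 ≤ i ≤ k. -/
def height (n : ℕ) (ψ : List ℕ) : ℕ := decRun n ψ.tail

/-- The hub seed (n, b, b⊖1, …, b⊖(n−3)). -/
def hubSeed (n b : ℕ) : List ℕ := n :: (List.range (n - 2)).map (fun j => (opred n)^[j] b)

/-- Hubₙ: the set of hub seeds. -/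
def Hub (n : ℕ) : Set (List ℕ) := { ψ | ∃ b, 1 ≤ b ∧ b ≤ n - 1 ∧ ψ = hubSeed n b }

/-- `IsParent n ψ β` means ψ = parent(β): ψ, β are neighboring distinct seeds,
height(ψ) > 1 and mis(ψ) = mis(β)⊕1. -/
def IsParent (n : ℕ) (par child : List ℕ) : Prop :=
  IsSeed n par ∧ IsSeed n child ∧ par ≠ child ∧
  (perms n par ∩ perms n child).Nonempty ∧
  1 < height n par ∧ mis n par = osucc n (mis n child)

/-- `IsSon n β ψ i` means β = son(ψ, i), i.e. β is a seed with σ^i(ψ^(i)) = β̃. -/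
def IsSon (n : ℕ) (child par : List ℕ) (i : ℕ) : Prop :=
  IsSeed n child ∧ sig^[i] (seedShift n par i) = tildeSeed n child

/-- γ_k = σ^k τ. -/
def gam (k : ℕ) : List Bool := List.replicate k false ++ [true]

/-- W_0 = σ and W_k = τ · ∏_{i=1}^{n−2} σ^i W_{Δ(k,i)} γ_{n−2−i},
where Δ(k,i) = min(k−1, n−2−i). -/
def W (n : ℕ) : ℕ → List Bool
  | 0 => [false]
  | k + 1 => true :: ((List.range (n - 2)).map (fun j =>
      List.replicate (j + 1) false ++ W n (min k (n - 2 - (j + 1))) ++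
        gam (n - 2 - (j + 1)))).flatten
  termination_by k => k
  decreasing_by omega

/-- V_n = γ_{n−3} · ∏_{i=2}^{n−3} σ^i W_{Δ(n−3,i)} γ_{n−2−i} · σ^{n−1}. -/
def V (n : ℕ) : List Bool :=
  gam (n - 3) ++
  ((List.range (n - 4)).map (fun j =>
    List.replicate (j + 2) false ++ W n (min (n - 4) (n - 2 - (j + 2))) ++
      gam (n - 2 - (j + 2)))).flatten ++
  List.replicate (n - 1) false

/-- SEQ_n = γ₁^{n−2} σ² (V_n τ)^{n−2} V_n. -/
def SEQ (n : ℕ) : List Bool :=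
  (List.replicate (n - 2) (gam 1)).flatten ++ List.replicate 2 false ++
  (List.replicate (n - 2) (V n ++ [true])).flatten ++ V n

/-- r: the first element after the value n in the left-to-right cyclic reading
of π with the entry p₂ skipped. -/
def rVal (n : ℕ) (π : List ℕ) : ℕ :=
  match π with
  | p1 :: _ :: rest =>
      let l := p1 :: rest
      l.getD ((l.idxOf n + 1) % l.length) 0
  | _ => 0

/-- The Sawada–Williams successor function `next`. -/
def swNext (n : ℕ) (π : List ℕ) : List ℕ :=
  if π = descList n then sig π
  else if π.getD 1 0 ≠ n ∧ π.getD 1 0 = osucc n (rVal n π) then tau π else sig π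

/-- GEN(π, α): all permutations visited (including π) when α is applied to π. -/
def GEN (α : List Bool) (π : List ℕ) : Set (List ℕ) :=
  { ρ | ∃ t, t ≤ α.length ∧ ρ = applyWord (α.take t) π }

/-- Tree(ψ): ψ together with all seeds from which ψ is reachable by parent links. -/
def SeedTree (n : ℕ) (ψ : List ℕ) : Set (List ℕ) :=
  { β | Relation.ReflTransGen (fun x y => IsParent n y x) β ψ }

/-- bunch(ψ) = (⋃_{β ∈ Tree(ψ)} perms(β) ∖ cycle(ψ̃)) ∪ {ψ̃, ψ^(n−1)}. -/
def bunch (n : ℕ) (ψ : List ℕ) : Set (List ℕ) :=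
  ((⋃ β ∈ SeedTree n ψ, perms n β) \ cycle (tildeSeed n ψ)) ∪
    {tildeSeed n ψ, seedShift n ψ (n - 1)}

/-- rank(π): the number of initial letters of SEQ_n needed to reach π from
π₀ = τ((n, n−1, …, 1)). -/
noncomputable def rank (n : ℕ) (π : List ℕ) : ℕ :=
  sInf { t | applyWord ((SEQ n).take t) (tau (descList n)) = π }

/-- SUM(k,j) = |τ · ∏_{i=1}^{j−1} σ^i W_{Δ(k,i)} γ_{n−2−i}| + j. -/
def SUMw (n k j : ℕ) : ℕ :=
  (true :: ((List.range (j - 1)).map (fun m =>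
    List.replicate (m + 1) false ++ W n (min (k - 1) (n - 2 - (m + 1))) ++
      gam (n - 2 - (m + 1)))).flatten).length + j

/-- ord(ψ): the position of the entry mis(ψ)⊕1 in ψ, counted from the right end. -/
def ord (n : ℕ) (ψ : List ℕ) : ℕ := ψ.length - ψ.idxOf (osucc n (mis n ψ))

/-- Length of the continuation of the maximal decreasing subsequence starting
with current value `cur`. -/
def chainLen (n : ℕ) : List ℕ → ℕ → ℕ
  | [], _ => 0
  | b :: rest, cur => if cur = osucc n b then chainLen n rest b + 1 else chainLen n rest cur

/-- level(ψ) = n − m − 3, where m+1 is the length of dec_seq(ψ). -/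
def level (n : ℕ) (ψ : List ℕ) : ℕ := n - chainLen n (ψ.drop 2) (ψ.getD 1 0) - 3

/-!
Every element of perms(φ) is a rotation of φ with mis(φ) inserted somewhere after the leading
entry n; such a list is an n-permutation, hence duplicate-free, and it starts with n. Two
rotations of a duplicate-free list with the same first entry coincide, so a common element of
two packages is one list L from which deleting mis(φ) gives φ and deleting mis(ψ) gives ψ.
Deleting both gives (ii), and the entry after n in L is either the inserted element or the
seed's own second entry a₂, whose successor is its missing element; this gives (i).
Conversely, if mis(ψ) = mis(φ)⊕1 then ψ = (n, mis(φ), …), and inserting the two missing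
elements into the common (n−2)-tuple in either order produces a list lying in both packages.
-/

namespace List

variable {α : Type*}

theorem IsRotated.eq_of_head?_eq {l l' : List α} (h : l ~r l') (hl : l.Nodup)
    (hhead : l.head? = l'.head?) : l = l' := by
  obtain ⟨k, rfl⟩ := h
  rcases eq_or_ne l [] with rfl | hne
  · simp
  have hk : k % l.length < l.length := Nat.mod_lt _ (length_pos_iff.2 hne)
  rw [← rotate_mod, head?_rotate hk, head?_eq_getElem?, getElem?_eq_getElem hk,
    getElem?_eq_getElem (length_pos_iff.2 hne), Option.some_inj, hl.getElem_inj_iff] at hhead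
  rw [← rotate_mod, ← hhead, rotate_zero]

variable [DecidableEq α]

theorem erase_insertIdx_of_notMem {a : α} :
    ∀ {i : ℕ} {l : List α}, a ∉ l → i ≤ l.length → (l.insertIdx i a).erase a = l
  | 0, l, _, _ => by simp
  | _ + 1, [], _, hi => by simp at hi
  | i + 1, b :: l, ha, hi => by
    rw [mem_cons, not_or] at ha
    rw [insertIdx_succ_cons, erase_cons_tail (by simpa using Ne.symm ha.1),
      erase_insertIdx_of_notMem ha.2 (by simpa using hi)]

theorem insertIdx_idxOf_erase {a : α} :
    ∀ {l : List α}, a ∈ l → (l.erase a).insertIdx (l.idxOf a) a = l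
  | b :: l, ha => by
    by_cases hb : b = a
    · subst hb
      simp
    · rw [erase_cons_tail (by simpa using hb), idxOf_cons_ne _ hb, insertIdx_succ_cons,
        insertIdx_idxOf_erase ((mem_cons.1 ha).resolve_left (Ne.symm hb))]

theorem erase_eq_erase_of_insertIdx_eq {l l' : List α} {a b : α} {i j : ℕ}
    (ha : a ∉ l) (hb : b ∉ l') (hi : i ≤ l.length) (hj : j ≤ l'.length)
    (h : l.insertIdx i a = l'.insertIdx j b) :
    l.erase b = l'.erase a := by
  rw [← erase_insertIdx_of_notMem ha hi, erase_comm, h, erase_insertIdx_of_notMem hb hj]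

end List

theorem osucc_injOn (n : ℕ) : Set.InjOn (osucc n) (Set.Icc 1 (n - 1)) := by
  intro a ⟨ha, _⟩ b ⟨hb, _⟩ h
  simp only [osucc] at h
  split_ifs at h <;> omega

theorem insertIdx_mem_perms {n : ℕ} {φ : List ℕ} {i : ℕ} (hi : i ≤ φ.length) :
    φ.insertIdx i (mis n φ) ∈ perms n φ :=
  ⟨i, 0, hi, (List.rotate_zero _).symm⟩

namespace IsSeed

variable {n : ℕ} {φ ψ : List ℕ}

theorem exists_eq_cons_cons (hn : 3 ≤ n) (h : IsSeed n φ) : ∃ b r, φ = n :: b :: r := by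
  obtain ⟨hlen, hhead, -⟩ := h
  match φ, hlen, hhead with
  | [], _, hhead => simp at hhead
  | [_], hlen, _ => simp at hlen; omega
  | a :: b :: r, _, hhead => exact ⟨b, r, by simpa using hhead⟩

theorem perm_mis_cons (hn : 3 ≤ n) (h : IsSeed n φ) :
    (mis n φ :: φ).Perm (List.range' 1 n) := by
  obtain ⟨b, r, rfl⟩ := h.exists_eq_cons_cons hn
  exact (List.Perm.swap _ _ _).trans h.2.2

theorem nodup_mis_cons (hn : 3 ≤ n) (h : IsSeed n φ) : (mis n φ :: φ).Nodup :=
  (h.perm_mis_cons hn).nodup_iff.2 List.nodup_range'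

theorem mis_notMem (hn : 3 ≤ n) (h : IsSeed n φ) : mis n φ ∉ φ :=
  (List.nodup_cons.1 (h.nodup_mis_cons hn)).1

theorem mis_ne (hn : 3 ≤ n) (h : IsSeed n φ) : mis n φ ≠ n := by
  obtain ⟨b, r, hφr⟩ := h.exists_eq_cons_cons hn
  intro hmis
  exact h.mis_notMem hn (by rw [hmis, hφr]; exact List.mem_cons_self)

theorem mem_Icc_of_mem_of_ne (hn : 3 ≤ n) (h : IsSeed n φ) {z : ℕ} (hz : z ∈ mis n φ :: φ)
    (hzn : z ≠ n) : z ∈ Set.Icc 1 (n - 1) := by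
  have := List.mem_range'_1.1 ((h.perm_mis_cons hn).subset hz)
  exact ⟨this.1, by omega⟩

theorem head?_insertIdx (hn : 3 ≤ n) (h : IsSeed n φ) {i : ℕ} (hi : 1 ≤ i) (a : ℕ) :
    (φ.insertIdx i a).head? = some n := by
  obtain ⟨b, r, rfl⟩ := h.exists_eq_cons_cons hn
  obtain ⟨i, rfl⟩ := Nat.exists_eq_add_of_le' hi
  rfl

theorem nodup_insertIdx (hn : 3 ≤ n) (h : IsSeed n φ) {i : ℕ} (hi : i ≤ φ.length) :
    (φ.insertIdx i (mis n φ)).Nodup :=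
  ((List.perm_insertIdx _ φ hi).trans (h.perm_mis_cons hn)).nodup_iff.2 List.nodup_range'

theorem exists_insertIdx_isRotated_of_mem_perms (hn : 3 ≤ n) (h : IsSeed n φ) {π : List ℕ}
    (hπ : π ∈ perms n φ) :
    ∃ i, 1 ≤ i ∧ i ≤ φ.length ∧ φ.insertIdx i (mis n φ) ~r π := by
  obtain ⟨_ | i, k, hi, rfl⟩ := hπ
  · refine ⟨φ.length, ?_, le_rfl, ?_⟩
    · rw [h.1]; omega
    · rw [List.insertIdx_length_self]
      exact (List.isRotated_concat _ _).trans ⟨k, rfl⟩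
  · exact ⟨i + 1, by omega, hi, ⟨k, rfl⟩⟩

end IsSeed

section Neighbors

variable {n : ℕ} {φ ψ : List ℕ}

theorem exists_insertIdx_eq_of_neighbors (hn : 3 ≤ n) (hφ : IsSeed n φ) (hψ : IsSeed n ψ)
    (h : (perms n φ ∩ perms n ψ).Nonempty) :
    ∃ i j, 1 ≤ i ∧ i ≤ φ.length ∧ 1 ≤ j ∧ j ≤ ψ.length ∧
      φ.insertIdx i (mis n φ) = ψ.insertIdx j (mis n ψ) := by
  obtain ⟨π, hπφ, hπψ⟩ := h
  obtain ⟨i, hi, hil, hiπ⟩ := hφ.exists_insertIdx_isRotated_of_mem_perms hn hπφ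
  obtain ⟨j, hj, hjl, hjπ⟩ := hψ.exists_insertIdx_isRotated_of_mem_perms hn hπψ
  refine ⟨i, j, hi, hil, hj, hjl, (hiπ.trans hjπ.symm).eq_of_head?_eq ?_ ?_⟩
  · exact hφ.nodup_insertIdx hn hil
  · rw [hφ.head?_insertIdx hn hi, hψ.head?_insertIdx hn hj]

theorem mis_adjacent_of_insertIdx_eq (hn : 3 ≤ n) (hφ : IsSeed n φ) (hψ : IsSeed n ψ)
    {i j : ℕ} (hi : 1 ≤ i) (hj : 1 ≤ j) (hmis : mis n φ ≠ mis n ψ)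
    (h : φ.insertIdx i (mis n φ) = ψ.insertIdx j (mis n ψ)) :
    mis n φ = osucc n (mis n ψ) ∨ mis n ψ = osucc n (mis n φ) := by
  obtain ⟨b, r, rfl⟩ := hφ.exists_eq_cons_cons hn
  obtain ⟨c, s, rfl⟩ := hψ.exists_eq_cons_cons hn
  obtain ⟨i, rfl⟩ := Nat.exists_eq_add_of_le' hi
  obtain ⟨j, rfl⟩ := Nat.exists_eq_add_of_le' hj
  have hsecond := congrArg (·[1]?) h
  simp only [mis, List.getD_cons_succ, List.getD_cons_zero] at hmis hsecond ⊢
  rcases i with _ | i <;> rcases j with _ | j <;>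
    simp only [List.insertIdx_succ_cons, List.insertIdx_zero, List.getElem?_cons_succ,
      List.getElem?_cons_zero, Option.some_inj] at hsecond
  · exact absurd hsecond hmis
  · exact Or.inr (congrArg (osucc n) hsecond.symm)
  · exact Or.inl (congrArg (osucc n) hsecond)
  · exact absurd (congrArg (osucc n) hsecond) hmis

theorem exists_eq_cons_mis_cons_of_mis_eq_osucc (hn : 3 ≤ n) (hφ : IsSeed n φ)
    (hψ : IsSeed n ψ) (hmis : mis n ψ = osucc n (mis n φ)) :
    ∃ s, ψ = n :: mis n φ :: s := by
  obtain ⟨c, s, hψs⟩ := hψ.exists_eq_cons_cons hn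
  have hcn : c ≠ n := by
    have := (List.nodup_cons.1 (hψ.nodup_mis_cons hn)).2
    rw [hψs, List.nodup_cons, List.mem_cons] at this
    exact fun h => this.1 (Or.inl h.symm)
  refine ⟨s, hψs.trans ?_⟩
  congr 2
  refine osucc_injOn n (hψ.mem_Icc_of_mem_of_ne hn (by simp [hψs]) hcn)
    (hφ.mem_Icc_of_mem_of_ne hn List.mem_cons_self (hφ.mis_ne hn)) ?_
  rw [← hmis, hψs, mis, List.getD_cons_succ, List.getD_cons_zero]

theorem neighbors_of_mis_eq_osucc (hn : 3 ≤ n) (hφ : IsSeed n φ) (hψ : IsSeed n ψ)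
    (hmis : mis n ψ = osucc n (mis n φ)) (herase : φ.erase (mis n ψ) = ψ.erase (mis n φ)) :
    (perms n φ ∩ perms n ψ).Nonempty := by
  obtain ⟨s, hψs⟩ := exists_eq_cons_mis_cons_of_mis_eq_osucc hn hφ hψ hmis
  set k := φ.idxOf (mis n ψ)
  have hyψ := hψ.mis_notMem hn
  have hyφ : mis n ψ ∈ φ := by
    have : mis n ψ ∈ mis n φ :: φ :=
      (hφ.perm_mis_cons hn).mem_iff.2 ((hψ.perm_mis_cons hn).mem_iff.1 List.mem_cons_self)
    refine (List.mem_cons.1 this).resolve_left fun h => hyψ ?_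
    rw [h, hψs]
    simp
  have hk : 1 ≤ k := by
    obtain ⟨b, r, hφr⟩ := hφ.exists_eq_cons_cons hn
    have hyn : n ≠ mis n ψ := fun h => hyψ (by rw [← h, hψs]; exact List.mem_cons_self)
    simp only [k, hφr, List.idxOf_cons_ne _ hyn]
    omega
  have hφs : (n :: s).insertIdx k (mis n ψ) = φ := by
    have hψerase : ψ.erase (mis n φ) = n :: s := by
      rw [hψs, List.erase_cons_tail (by simpa using (hφ.mis_ne hn).symm), List.erase_cons_head]
    simpa only [herase, hψerase] using List.insertIdx_idxOf_erase hyφ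
  have hψlen : ψ.length = (n :: s).length + 1 := by rw [hψs]; rfl
  have hkle : k ≤ (n :: s).length := by
    have := List.idxOf_lt_length_iff.2 hyφ
    rw [hφ.1, ← hψ.1, hψlen] at this
    omega
  have hcommon : φ.insertIdx 1 (mis n φ) = ψ.insertIdx (k + 1) (mis n ψ) :=
    calc φ.insertIdx 1 (mis n φ)
        = ((n :: s).insertIdx k (mis n ψ)).insertIdx 1 (mis n φ) := by rw [hφs]
      _ = ((n :: s).insertIdx 1 (mis n φ)).insertIdx (k + 1) (mis n ψ) :=
        (List.insertIdx_comm _ _ hk hkle).symm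
      _ = ψ.insertIdx (k + 1) (mis n ψ) := congrArg (·.insertIdx (k + 1) (mis n ψ)) hψs.symm
  refine ⟨φ.insertIdx 1 (mis n φ), insertIdx_mem_perms (by rw [hφ.1]; omega), ?_⟩
  rw [hcommon]
  exact insertIdx_mem_perms (by rw [hψlen]; omega)

end Neighbors

/-- two distinct seeds are neighbors iff their missing elements are
cyclically consecutive and deleting each other's missing element yields the same
(n−2)-tuple. -/
theorem neighbors_iff (n : ℕ) (hn : 4 ≤ n) (φ ψ : List ℕ)
    (hφ : IsSeed n φ) (hψ : IsSeed n ψ) (hne : φ ≠ ψ) :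
    (perms n φ ∩ perms n ψ).Nonempty ↔
      ((mis n φ = osucc n (mis n ψ) ∨ mis n ψ = osucc n (mis n φ)) ∧
        φ.erase (mis n ψ) = ψ.erase (mis n φ)) := by
  have hn3 : 3 ≤ n := by omega
  constructor
  · intro h
    obtain ⟨i, j, hi, hil, hj, hjl, hij⟩ := exists_insertIdx_eq_of_neighbors hn3 hφ hψ h
    have hmis : mis n φ ≠ mis n ψ := fun hmis => hne <| by
      rw [← List.erase_insertIdx_of_notMem (hφ.mis_notMem hn3) hil, hij, hmis,
        List.erase_insertIdx_of_notMem (hψ.mis_notMem hn3) hjl]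
    exact ⟨mis_adjacent_of_insertIdx_eq hn3 hφ hψ hi hj hmis hij,
      List.erase_eq_erase_of_insertIdx_eq (hφ.mis_notMem hn3) (hψ.mis_notMem hn3) hil hjl hij⟩
  · rintro ⟨hmis | hmis, herase⟩
    · rw [Set.inter_comm]
      exact neighbors_of_mis_eq_osucc hn3 hψ hφ hmis herase.symm
    · exact neighbors_of_mis_eq_osucc hn3 hφ hψ hmis herase
end

section
/- For every integer n ≥ 5, if φ = parent(ψ) for seeds φ, ψ, then perms(φ) ∩ perms(ψ) = cycle(ψ̃), the set of the n cyclic shifts of ψ̃; in particular, when ψ = son(φ, i), the permutation φ^(i) belongs to cycle(ψ̃). -/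
/-!
Write φ = (n, b, c, …) with b = c ⊕ 1; then ψ = (n, c, …) and mis(ψ) = b. Read a common element
π of both packages as a cyclic arrangement and look at the successor of n. As an insertion of
b ⊕ 1 into φ, that successor is b or b ⊕ 1; as an insertion of b into ψ, it is c unless b was
inserted right after n, i.e. unless π is a rotation of ψ̃ = (n, b, c, …). Since c differs from
b and b ⊕ 1, π ∈ cycle(ψ̃). Conversely, packages are closed under rotation, ψ̃ ∈ perms(ψ), and
perms(φ) contains a rotation of ψ̃ because the two packages meet.
-/

namespace List

variable {α : Type*}

theorem insertIdx_isRotated {l : List α} {i : ℕ} (x : α) (h : i ≤ l.length) :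
    l.insertIdx i x ~r x :: l.rotate i := by
  have htake : l.insertIdx i x = l.take i ++ x :: l.drop i := by
    induction l generalizing i <;> cases i <;> simp_all [insertIdx_succ_cons]
  rw [htake, rotate_eq_drop_append_take h]
  exact isRotated_append

theorem IsRotated.cons_inj {a : α} {l₁ l₂ : List α} (h : a :: l₁ ~r a :: l₂)
    (hnd : (a :: l₁).Nodup) : l₁ = l₂ := by
  obtain ⟨k, hk⟩ := h
  have hlen : 0 < (a :: l₁).length := by simp
  have hhead : (a :: l₁)[k % (a :: l₁).length]? = (a :: l₁)[0]? := by
    rw [← head?_rotate (Nat.mod_lt _ hlen), rotate_mod, hk]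
    rfl
  have hk0 : k % (a :: l₁).length = 0 := by
    rw [getElem?_eq_getElem (Nat.mod_lt _ hlen), getElem?_eq_getElem hlen,
      Option.some_inj, hnd.getElem_inj_iff] at hhead
    exact hhead
  rw [← rotate_mod, hk0, rotate_zero] at hk
  exact (cons_inj_right a).mp hk

theorem next_cons_eq_or_isRotated [DecidableEq α] {x a : α} {ρ l : List α}
    (hnd : (x :: ρ).Nodup) (hρ : ρ ~r a :: l) (ha : a ∈ x :: ρ) :
    (x :: ρ).next a ha = (a :: l).next a mem_cons_self ∨ x :: ρ ~r a :: x :: l := by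
  have haρ : a ∈ ρ := hρ.mem_iff.mpr mem_cons_self
  have hρne : ρ ≠ [] := ne_nil_of_mem haρ
  have hρnd : ρ.Nodup := (nodup_cons.mp hnd).2
  by_cases hlast : a = ρ.getLast hρne
  · right
    have hsplit : ρ.dropLast ++ [a] = ρ := by rw [hlast, dropLast_append_getLast]
    have hrot : a :: ρ.dropLast ~r ρ := by
      nth_rewrite 2 [← hsplit]
      exact IsRotated.cons_append_singleton
    have hinit : ρ.dropLast = l := (hrot.trans hρ).cons_inj (hrot.nodup_iff.mpr hρnd)
    rw [← hsplit, hinit, ← cons_append]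
    exact isRotated_concat a (x :: l)
  · left
    have hax : a ≠ x := fun h => (nodup_cons.mp hnd).1 (h ▸ haρ)
    rw [next_cons_eq_next_of_mem_dropLast _ _ (mem_dropLast_of_mem_of_ne_getLast haρ hlast) x hax]
    exact isRotated_next_eq hρ hρnd haρ

theorem isRotated_of_two_insertions [DecidableEq α] {π ρ₁ ρ₂ l₁ l₂ : List α} {a x₁ x₂ u v : α}
    (hπ : π.Nodup) (h₁ : π ~r x₁ :: ρ₁) (hρ₁ : ρ₁ ~r a :: u :: l₁)
    (h₂ : π ~r x₂ :: ρ₂) (hρ₂ : ρ₂ ~r a :: v :: l₂) (hx₁v : x₁ ≠ v) (huv : u ≠ v) :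
    π ~r a :: x₂ :: v :: l₂ := by
  have ha : a ∈ π := h₁.mem_iff.mpr (mem_cons_of_mem _ (hρ₁.mem_iff.mpr mem_cons_self))
  have hnext₁ : π.next a ha = u ∨ π.next a ha = x₁ := by
    rw [isRotated_next_eq h₁ hπ ha]
    rcases next_cons_eq_or_isRotated (h₁.nodup_iff.mp hπ) hρ₁ (h₁.mem_iff.mp ha) with h | h
    · exact Or.inl (h.trans (next_cons_cons_eq _ _ _ _))
    · exact Or.inr
        ((isRotated_next_eq h (h₁.nodup_iff.mp hπ) _).trans (next_cons_cons_eq _ _ _ _))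
  rcases next_cons_eq_or_isRotated (h₂.nodup_iff.mp hπ) hρ₂ (h₂.mem_iff.mp ha) with h | h
  · have hv : π.next a ha = v :=
      (isRotated_next_eq h₂ hπ ha).trans (h.trans (next_cons_cons_eq _ _ _ _))
    rcases hnext₁ with hu | hx
    · exact absurd (hu.symm.trans hv) huv
    · exact absurd (hx.symm.trans hv) hx₁v
  · exact h₂.trans h

end List

theorem osucc_pos (n a : ℕ) : 1 ≤ osucc n a := by
  unfold osucc; split <;> omega

theorem osucc_inj {n a b : ℕ} (ha : 1 ≤ a) (hb : 1 ≤ b) (h : osucc n a = osucc n b) : a = b := by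
  unfold osucc at h; split_ifs at h <;> omega

theorem IsPerm.one_le {n z : ℕ} {l : List ℕ} (h : IsPerm n l) (hz : z ∈ l) : 1 ≤ z :=
  (List.mem_range'_1.mp (h.subset hz)).1

theorem IsSeed.eq_cons_cons {n : ℕ} {ψ : List ℕ} (h : IsSeed n ψ) (hn : 3 ≤ n) :
    ∃ a t, ψ = n :: a :: t ∧ IsPerm n (n :: osucc n a :: a :: t) := by
  obtain ⟨hlen, hhead, hperm⟩ := h
  match ψ, hlen, hhead with
  | a₁ :: a :: t, _, hhead =>
    obtain rfl : a₁ = n := Option.some_inj.mp hhead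
    exact ⟨a, t, rfl, hperm⟩
  | [], hlen, _ | [_], hlen, _ => simp at hlen; omega

theorem eq_cons_of_one_lt_height {n a b : ℕ} {t : List ℕ} (h : 1 < height n (a :: b :: t)) :
    ∃ c r, t = c :: r ∧ b = osucc n c := by
  match t with
  | [] => simp [height, decRun] at h
  | c :: r =>
    refine ⟨c, r, rfl, ?_⟩
    by_contra hbc
    simp [height, decRun, hbc] at h

theorem IsParent.eq_cons {n : ℕ} {φ ψ : List ℕ} (h : IsParent n φ ψ) (hn : 3 ≤ n) :
    ∃ b c r r', φ = n :: b :: c :: r ∧ ψ = n :: c :: r' ∧ b = osucc n c ∧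
      IsPerm n (n :: osucc n b :: b :: c :: r) := by
  obtain ⟨hφ, hψ, -, -, hheight, hmis⟩ := h
  obtain ⟨b, t, rfl, hφp⟩ := hφ.eq_cons_cons hn
  obtain ⟨a, r', rfl, hψp⟩ := hψ.eq_cons_cons hn
  obtain ⟨c, r, rfl, hbc⟩ := eq_cons_of_one_lt_height hheight
  have hb : 1 ≤ b := hφp.one_le (by simp)
  have hc : 1 ≤ c := hφp.one_le (by simp)
  have ha : 1 ≤ a := hψp.one_le (by simp)
  have hba : b = osucc n a := osucc_inj hb (osucc_pos n a) (by simpa [mis] using hmis)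
  obtain rfl : c = a := osucc_inj hc ha (hbc.symm.trans hba)
  exact ⟨b, c, r, r', rfl, rfl, hbc, hφp⟩

theorem mem_cycle_iff {π ρ : List ℕ} : ρ ∈ cycle π ↔ π ~r ρ :=
  ⟨fun ⟨j, h⟩ => ⟨j, h.symm⟩, fun ⟨j, h⟩ => ⟨j, h.symm⟩⟩

theorem sig_iterate (i : ℕ) (l : List ℕ) : sig^[i] l = l.rotate i := by
  induction i with
  | zero => simp
  | succ k ih => rw [Function.iterate_succ_apply', ih, sig, List.rotate_rotate]

theorem mem_perms_of_isRotated {n : ℕ} {ψ π π' : List ℕ} (h : π ∈ perms n ψ) (hπ : π ~r π') :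
    π' ∈ perms n ψ := by
  obtain ⟨i, j, hi, rfl⟩ := h
  obtain ⟨k, rfl⟩ := hπ
  exact ⟨i, j + k, hi, List.rotate_rotate _ _ _⟩

theorem exists_isRotated_of_mem_perms {n : ℕ} {ψ π : List ℕ} (h : π ∈ perms n ψ) :
    ∃ ρ, ρ ~r ψ ∧ π ~r mis n ψ :: ρ := by
  obtain ⟨i, j, hi, rfl⟩ := h
  exact ⟨ψ.rotate i, List.IsRotated.forall ψ i,
    (List.IsRotated.forall _ j).trans (List.insertIdx_isRotated _ hi)⟩

theorem nodup_of_mem_perms {n a₁ a₂ : ℕ} {t π : List ℕ}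
    (hp : IsPerm n (seedToPerm n (a₁ :: a₂ :: t))) (h : π ∈ perms n (a₁ :: a₂ :: t)) :
    π.Nodup := by
  obtain ⟨i, j, hi, rfl⟩ := h
  refine List.nodup_rotate.mpr ((List.perm_insertIdx _ _ hi).nodup_iff.mpr ?_)
  exact (List.Perm.swap _ _ _).nodup_iff.mp (hp.nodup_iff.mpr List.nodup_range')

theorem tildeSeed_mem_perms (n a : ℕ) (t : List ℕ) : tildeSeed n (a :: t) ∈ perms n (a :: t) :=
  ⟨1, 0, by simp, by simp [tildeSeed, List.insertIdx_succ_cons]⟩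

theorem perms_inter_perms_subset_cycle {n b c : ℕ} {r r' : List ℕ} (hbc : b = osucc n c)
    (hφp : IsPerm n (n :: osucc n b :: b :: c :: r)) :
    perms n (n :: b :: c :: r) ∩ perms n (n :: c :: r') ⊆ cycle (tildeSeed n (n :: c :: r')) := by
  have hmis : mis n (n :: c :: r') = b := by simp [mis, hbc]
  have hnd : (n :: osucc n b :: b :: c :: r).Nodup := hφp.nodup_iff.mpr List.nodup_range'
  simp only [List.nodup_cons, List.mem_cons, not_or] at hnd
  obtain ⟨-, ⟨-, hsucc_ne, -⟩, ⟨hb_ne, -⟩, -⟩ := hnd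
  rintro π ⟨h₁, h₂⟩
  obtain ⟨ρ₁, hρ₁, hπ₁⟩ := exists_isRotated_of_mem_perms h₁
  obtain ⟨ρ₂, hρ₂, hπ₂⟩ := exists_isRotated_of_mem_perms h₂
  rw [mem_cycle_iff, tildeSeed, hmis]
  exact (List.isRotated_of_two_insertions (nodup_of_mem_perms hφp h₁) hπ₁ hρ₁ (hmis ▸ hπ₂) hρ₂
    hsucc_ne hb_ne).symm

/-- if φ = parent(ψ) then perms(φ) ∩ perms(ψ) = cycle(ψ̃);
in particular when ψ = son(φ, i), φ^(i) ∈ cycle(ψ̃). -/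
theorem parent_intersection_eq_cycle (n : ℕ) (hn : 5 ≤ n) (φ ψ : List ℕ)
    (hpar : IsParent n φ ψ) :
    perms n φ ∩ perms n ψ = cycle (tildeSeed n ψ) ∧
    ∀ i, IsSon n ψ φ i → seedShift n φ i ∈ cycle (tildeSeed n ψ) := by
  obtain ⟨b, c, r, r', rfl, rfl, hbc, hφp⟩ := hpar.eq_cons (by omega)
  have hsub := perms_inter_perms_subset_cycle (r' := r') hbc hφp
  refine ⟨Set.Subset.antisymm hsub fun π hπ => ⟨?_, ?_⟩, ?_⟩
  · obtain ⟨-, -, -, ⟨π₀, hπ₀⟩, -⟩ := hpar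
    exact mem_perms_of_isRotated hπ₀.1
      ((mem_cycle_iff.mp (hsub hπ₀)).symm.trans (mem_cycle_iff.mp hπ))
  · exact mem_perms_of_isRotated (tildeSeed_mem_perms n n _) (mem_cycle_iff.mp hπ)
  · rintro i ⟨-, hson⟩
    rw [sig_iterate] at hson
    exact mem_cycle_iff.mpr (hson ▸ List.IsRotated.forall _ i)
end
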